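/- Let Φ : X×Y → ℝ^m be a generating function, p* a probability distribution on X×Y with τ∞ = Σ_{(x,y)} p*(x,y)·Φ(x,y), and a, b ∈ ℝ^m with a ≤ τ∞ ≤ b componentwise. Let (λ*, γ*) be an optimal solution of problem (8) for the vector τ∞. Then the minimax expected losses satisfy R_Φ^{a,b} ≤ R_Φ^{τ∞} + (τ∞ − a)ᵀ(λ*)^+ + (b − τ∞)ᵀ(−λ*)^+, where (λ*)^+ and (−λ*)^+ denote componentwise positive parts. -/

import Mathlib

open Finset

/-- A probability distribution on `X × Y`. -/
def IsProb {X Y : Type*} [Fintype X] [Fintype Y] (p : X × Y → ℝ) : Prop :=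
  (∀ z, 0 ≤ p z) ∧ ∑ z : X × Y, p z = 1

/-- A (probabilistic) classification rule on `X × Y`. -/
def IsRule {X Y : Type*} [Fintype X] [Fintype Y] (h : X × Y → ℝ) : Prop :=
  (∀ z, 0 ≤ h z) ∧ ∀ x : X, ∑ y : Y, h (x, y) = 1

/-- Expected 0-1 loss `ℓ(h, p) = 1 - ∑ p·h`. -/
def loss {X Y : Type*} [Fintype X] [Fintype Y] (h p : X × Y → ℝ) : ℝ :=
  1 - ∑ z : X × Y, p z * h z

/-- Membership in the polyhedral uncertainty set `U_Φ^{a,b}`. -/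
def InU {X Y : Type*} [Fintype X] [Fintype Y] {m : ℕ}
    (Φ : X × Y → Fin m → ℝ) (a b : Fin m → ℝ) (p : X × Y → ℝ) : Prop :=
  IsProb p ∧ ∀ i, a i ≤ (∑ z : X × Y, p z * Φ z i) ∧ (∑ z : X × Y, p z * Φ z i) ≤ b i

/-- Feasibility for problem (8). -/
def Feas8 {X Y : Type*} [Fintype X] [Fintype Y] [Nonempty X] [Nonempty Y] {m : ℕ}
    (Φ : X × Y → Fin m → ℝ) (l : Fin m → ℝ) (γ : ℝ) : Prop :=
  (Finset.univ.sup' Finset.univ_nonempty fun x : X =>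
    ∑ y : Y, max (∑ i, Φ (x, y) i * l i + γ) 0) ≤ 1

/-- Optimality for problem (8) with expectation point estimate `a`. -/
def Opt8 {X Y : Type*} [Fintype X] [Fintype Y] [Nonempty X] [Nonempty Y] {m : ℕ}
    (Φ : X × Y → Fin m → ℝ) (a : Fin m → ℝ) (l : Fin m → ℝ) (γ : ℝ) : Prop :=
  Feas8 Φ l γ ∧ ∀ l' : Fin m → ℝ, ∀ γ' : ℝ, Feas8 Φ l' γ' →
    (∑ i, a i * l' i) + γ' ≤ (∑ i, a i * l i) + γ

/-- The minimax expected loss `R_Φ^{a,b}`. -/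
noncomputable def Rab {X Y : Type*} [Fintype X] [Fintype Y] {m : ℕ}
    (Φ : X × Y → Fin m → ℝ) (a b : Fin m → ℝ) : ℝ :=
  sInf {r | ∃ h : X × Y → ℝ, IsRule h ∧ r = sSup {s | ∃ p, InU Φ a b p ∧ s = loss h p}}

/-! The rule obtained from `max (Φᵀλ* + γ*) 0` by spreading the missing mass of each row
uniformly over `Y` loses at most `1 - (aᵀ(λ*)⁺ - bᵀ(-λ*)⁺ + γ*)` on `U^{a,b}`, and
`aᵀ(λ*)⁺ - bᵀ(-λ*)⁺ = τᵀλ* - (τ - a)ᵀ(λ*)⁺ - (b - τ)ᵀ(-λ*)⁺`. Conversely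
`R^τ ≥ 1 - (τᵀλ* + γ*)` by LP duality: if a rule `h` had worst-case loss below this on `U^τ`,
separating `(τ, τᵀλ* + γ*)` from the image of the simplex under `p ↦ (E_p Φ, E_p h)` would give
an affine function `Φᵀλ + γ` strictly below `h`, i.e. a feasible point of (8) beating the
optimum at `τ`. -/

section Separation

variable {E : Type*} [AddCommGroup E] [Module ℝ E] [TopologicalSpace E] [IsTopologicalAddGroup E]
  [ContinuousSMul ℝ E] [LocallyConvexSpace ℝ E]

theorem exists_affine_lt_of_notMem {S : Set (E × ℝ)} (hconv : Convex ℝ S) (hclosed : IsClosed S)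
    {x : E} {c w : ℝ} (hc : (x, c) ∉ S) (hw : (x, w) ∈ S) (hcw : c < w) :
    ∃ (φ : StrongDual ℝ E) (γ : ℝ), (∀ q ∈ S, φ q.1 + γ < q.2) ∧ c < φ x + γ := by
  obtain ⟨f, u, hfc, hfS⟩ := geometric_hahn_banach_point_closed hconv hclosed hc
  set s := f (0, 1)
  have hsplit : ∀ q : E × ℝ, f q = f (q.1, 0) + q.2 * s := fun q => by
    rw [← smul_eq_mul, ← map_smul, ← map_add]
    simp
  -- the separating hyperplane is not vertical, since `S` meets the vertical line through `x`
  have hs : 0 < s := by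
    have := hfc.trans (hfS _ hw)
    rw [hsplit (x, c), hsplit (x, w)] at this
    nlinarith
  set φ : StrongDual ℝ E := -(s⁻¹ • f.comp (ContinuousLinearMap.inl ℝ E ℝ))
  have hφ : ∀ y, φ y + u / s = (u - f (y, 0)) / s := fun y => by
    simp only [φ, neg_apply, smul_apply, ContinuousLinearMap.comp_apply,
      ContinuousLinearMap.inl_apply, smul_eq_mul]
    field_simp
    ring
  refine ⟨φ, u / s, fun q hq => ?_, ?_⟩
  · have := hfS q hq
    rw [hsplit] at this
    rw [hφ, div_lt_iff₀ hs]
    linarith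
  · rw [hsplit] at hfc
    rw [hφ, lt_div_iff₀ hs]
    linarith

end Separation

theorem exists_affine_lt_of_forall_lt_sum_mul {ι E : Type*} [Fintype ι] [NormedAddCommGroup E]
    [NormedSpace ℝ E] (v : ι → E) (h : ι → ℝ) {x : E} {c : ℝ}
    (hx : ∃ p ∈ stdSimplex ℝ ι, ∑ i, p i • v i = x)
    (hc : ∀ p ∈ stdSimplex ℝ ι, ∑ i, p i • v i = x → c < ∑ i, p i * h i) :
    ∃ (φ : StrongDual ℝ E) (γ : ℝ), (∀ i, φ (v i) + γ < h i) ∧ c < φ x + γ := by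
  classical
  set T := Fintype.linearCombination ℝ fun i => (v i, h i)
  have hT : ∀ p, T p = (∑ i, p i • v i, ∑ i, p i * h i) := fun p => by
    ext <;> simp [T, Fintype.linearCombination_apply, Prod.fst_sum, Prod.snd_sum]
  obtain ⟨p, hp, rfl⟩ := hx
  have hnotMem : (∑ i, p i • v i, c) ∉ T '' stdSimplex ℝ ι := by
    rintro ⟨q, hq, hTq⟩
    rw [hT, Prod.mk.injEq] at hTq
    exact (hc q hq hTq.1).ne' hTq.2
  obtain ⟨φ, γ, hφS, hφc⟩ := exists_affine_lt_of_notMem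
    ((convex_stdSimplex ℝ ι).linear_image T)
    ((isCompact_stdSimplex ℝ ι).image T.continuous_of_finiteDimensional).isClosed
    hnotMem ⟨p, hp, hT p⟩ (hc p hp rfl)
  refine ⟨φ, γ, fun i => ?_, hφc⟩
  simpa [hT, Pi.single_apply] using hφS _ ⟨Pi.single i 1, single_mem_stdSimplex ℝ i, rfl⟩

theorem max_mul_sub_max_neg_mul_le_mul {a b e l : ℝ} (ha : a ≤ e) (hb : e ≤ b) :
    a * max l 0 - b * max (-l) 0 ≤ e * l := by
  rcases le_total 0 l with hl | hl
  · rw [max_eq_left hl, max_eq_right (neg_nonpos.2 hl)]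
    nlinarith
  · rw [max_eq_right hl, max_eq_left (neg_nonneg.2 hl)]
    nlinarith

section Classification

variable {X Y : Type*} [Fintype X] [Fintype Y] {m : ℕ} {Φ : X × Y → Fin m → ℝ}
  {a b : Fin m → ℝ} {h p : X × Y → ℝ}

theorem IsRule.le_one (hh : IsRule h) (z : X × Y) : h z ≤ 1 :=
  calc h z ≤ ∑ y, h (z.1, y) := single_le_sum (fun y _ => hh.1 (z.1, y)) (mem_univ z.2)
    _ = 1 := hh.2 z.1

theorem loss_nonneg (hh : IsRule h) (hp : IsProb p) : 0 ≤ loss h p := by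
  have : ∑ z, p z * h z ≤ ∑ z, p z :=
    sum_le_sum fun z _ => mul_le_of_le_one_right (hp.1 z) (hh.le_one z)
  rw [loss]
  linarith [hp.2]

theorem loss_le_one (hh : IsRule h) (hp : IsProb p) : loss h p ≤ 1 :=
  sub_le_self _ (sum_nonneg fun z _ => mul_nonneg (hp.1 z) (hh.1 z))

theorem IsProb.sum_mul_affine (hp : IsProb p) (Φ : X × Y → Fin m → ℝ) (l : Fin m → ℝ) (γ : ℝ) :
    ∑ z, p z * (∑ i, Φ z i * l i + γ) = ∑ i, (∑ z, p z * Φ z i) * l i + γ := by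
  simp only [mul_add, mul_sum, sum_add_distrib, ← sum_mul, hp.2, one_mul, ← mul_assoc]
  rw [sum_comm]
  simp only [sum_mul]

theorem inU_self_iff {τ : Fin m → ℝ} :
    InU Φ τ τ p ↔ p ∈ stdSimplex ℝ (X × Y) ∧ ∑ z, p z • Φ z = τ := by
  simp only [InU, IsProb, stdSimplex, Set.mem_ofPred_eq, funext_iff, Finset.sum_apply,
    Pi.smul_apply, smul_eq_mul, ← le_antisymm_iff, eq_comm]

theorem exists_isRule_le [Nonempty Y] {g : X × Y → ℝ} (hg : ∀ z, 0 ≤ g z)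
    (hg₁ : ∀ x, ∑ y, g (x, y) ≤ 1) : ∃ h, IsRule h ∧ ∀ z, g z ≤ h z := by
  have hY : (0 : ℝ) < Fintype.card Y := by exact_mod_cast Fintype.card_pos
  -- spread the missing mass of each row uniformly over `Y`
  have hslack : ∀ z : X × Y, g z ≤ g z + (1 - ∑ y, g (z.1, y)) / Fintype.card Y := fun z =>
    le_add_of_nonneg_right (div_nonneg (sub_nonneg.2 (hg₁ z.1)) hY.le)
  refine ⟨_, ⟨fun z => (hg z).trans (hslack z), fun x => ?_⟩, hslack⟩
  simp only [sum_add_distrib, sum_const, card_univ, nsmul_eq_mul]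
  field_simp
  ring

noncomputable def worstCaseLoss (Φ : X × Y → Fin m → ℝ) (a b : Fin m → ℝ) (h : X × Y → ℝ) : ℝ :=
  sSup {s | ∃ p, InU Φ a b p ∧ s = loss h p}

theorem loss_le_worstCaseLoss (hh : IsRule h) (hp : InU Φ a b p) :
    loss h p ≤ worstCaseLoss Φ a b h :=
  le_csSup ⟨1, by rintro _ ⟨q, hq, rfl⟩; exact loss_le_one hh hq.1⟩ ⟨p, hp, rfl⟩

theorem worstCaseLoss_le {c : ℝ} (hp : InU Φ a b p) (hc : ∀ q, InU Φ a b q → loss h q ≤ c) :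
    worstCaseLoss Φ a b h ≤ c :=
  csSup_le ⟨_, p, hp, rfl⟩ fun _ ⟨q, hq, hs⟩ => hs ▸ hc q hq

theorem worstCaseLoss_nonneg (hh : IsRule h) : 0 ≤ worstCaseLoss Φ a b h :=
  Real.sSup_nonneg fun _ ⟨_, hq, hs⟩ => hs ▸ loss_nonneg hh hq.1

theorem Rab_le_worstCaseLoss (hh : IsRule h) : Rab Φ a b ≤ worstCaseLoss Φ a b h :=
  csInf_le ⟨0, fun _ ⟨_, hh', hr⟩ => hr ▸ worstCaseLoss_nonneg hh'⟩ ⟨h, hh, rfl⟩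

theorem le_Rab {c : ℝ} (hne : ∃ h : X × Y → ℝ, IsRule h)
    (hc : ∀ h, IsRule h → c ≤ worstCaseLoss Φ a b h) : c ≤ Rab Φ a b := by
  obtain ⟨h, hh⟩ := hne
  exact le_csInf ⟨_, h, hh, rfl⟩ fun _ ⟨h', hh', hr⟩ => hr ▸ hc h' hh'

variable [Nonempty X] [Nonempty Y] {l : Fin m → ℝ} {γ : ℝ}

theorem Feas8.sum_max_le_one (hf : Feas8 Φ l γ) (x : X) :
    ∑ y, max (∑ i, Φ (x, y) i * l i + γ) 0 ≤ 1 :=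
  (le_sup' (fun x : X => ∑ y, max (∑ i, Φ (x, y) i * l i + γ) 0) (mem_univ x)).trans hf

theorem feas8_of_le_isRule (hh : IsRule h) (hle : ∀ z, ∑ i, Φ z i * l i + γ ≤ h z) :
    Feas8 Φ l γ :=
  sup'_le _ _ fun x _ =>
    (sum_le_sum fun y _ => max_le (hle (x, y)) (hh.1 (x, y))).trans_eq (hh.2 x)

theorem Rab_le_of_feas8 (hf : Feas8 Φ l γ) (hne : ∃ p, InU Φ a b p) :
    Rab Φ a b ≤ 1 - (∑ i, (a i * max (l i) 0 - b i * max (-l i) 0) + γ) := by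
  obtain ⟨h, hh, hgh⟩ := exists_isRule_le (g := fun z => max (∑ i, Φ z i * l i + γ) 0)
    (fun _ => le_max_right _ _) hf.sum_max_le_one
  obtain ⟨p₀, hp₀⟩ := hne
  refine (Rab_le_worstCaseLoss hh).trans (worstCaseLoss_le hp₀ fun p hp => ?_)
  have hmoment : ∑ i, (a i * max (l i) 0 - b i * max (-l i) 0) ≤ ∑ i, (∑ z, p z * Φ z i) * l i :=
    sum_le_sum fun i _ => max_mul_sub_max_neg_mul_le_mul (hp.2 i).1 (hp.2 i).2
  have hmass : ∑ i, (∑ z, p z * Φ z i) * l i + γ ≤ ∑ z, p z * h z := by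
    rw [← hp.1.sum_mul_affine]
    exact sum_le_sum fun z _ =>
      mul_le_mul_of_nonneg_left ((le_max_left _ _).trans (hgh z)) (hp.1.1 z)
  rw [loss]
  linarith

theorem le_Rab_of_opt8 {τ : Fin m → ℝ} {pstar : X × Y → ℝ} (hopt : Opt8 Φ τ l γ)
    (hpstar : InU Φ τ τ pstar) : 1 - (∑ i, τ i * l i + γ) ≤ Rab Φ τ τ := by
  obtain ⟨h₀, hh₀, -⟩ := exists_isRule_le (X := X) (Y := Y) (g := 0) (fun _ => le_rfl)
    fun _ => by simp
  refine le_Rab ⟨h₀, hh₀⟩ fun h hh => ?_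
  by_contra! hlt
  have hmass : ∀ p, InU Φ τ τ p → ∑ i, τ i * l i + γ < ∑ z, p z * h z := fun p hp => by
    have := (loss_le_worstCaseLoss hh hp).trans_lt hlt
    rw [loss] at this
    linarith
  obtain ⟨φ, γ', hφh, hφτ⟩ := exists_affine_lt_of_forall_lt_sum_mul Φ h
    ⟨pstar, inU_self_iff.1 hpstar⟩ fun p hp hpτ => hmass p (inU_self_iff.2 ⟨hp, hpτ⟩)
  have hφ : ∀ μ, φ μ = ∑ i, μ i * φ (Pi.single i 1) := fun μ => by
    conv_lhs => rw [← univ_sum_single μ]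
    rw [map_sum]
    refine sum_congr rfl fun i _ => ?_
    rw [← smul_eq_mul, ← map_smul, ← Pi.single_smul, smul_eq_mul, mul_one]
  have := hopt.2 (fun i => φ (Pi.single i 1)) γ'
    (feas8_of_le_isRule hh fun z => by rw [← hφ]; exact (hφh z).le)
  rw [← hφ] at this
  linarith

end Classification

/-- `R_Φ^{a,b} ≤ R_Φ^{τ∞} + (τ∞ − a)ᵀ(λ*)⁺ + (b − τ∞)ᵀ(−λ*)⁺` for an
optimal solution `(λ*, γ*)` of problem (8) at `τ∞`. -/
theorem lpc_minimax_perturbation {X Y : Type*} [Fintype X] [Fintype Y]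
    [Nonempty X] [Nonempty Y] {m : ℕ}
    (Φ : X × Y → Fin m → ℝ) (pstar : X × Y → ℝ) (hstar : IsProb pstar)
    (τ : Fin m → ℝ) (hτ : ∀ i, τ i = ∑ z : X × Y, pstar z * Φ z i)
    (a b : Fin m → ℝ) (ha : ∀ i, a i ≤ τ i) (hb : ∀ i, τ i ≤ b i)
    (l : Fin m → ℝ) (γ : ℝ) (hopt : Opt8 Φ τ l γ) :
    Rab Φ a b ≤ Rab Φ τ τ + (∑ i, (τ i - a i) * max (l i) 0) +
      (∑ i, (b i - τ i) * max (-l i) 0) := by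
  have hlower := le_Rab_of_opt8 hopt ⟨hstar, fun i => ⟨(hτ i).le, (hτ i).ge⟩⟩
  have hupper := Rab_le_of_feas8 hopt.1
    ⟨pstar, hstar, fun i => ⟨(ha i).trans (hτ i).le, (hτ i).ge.trans (hb i)⟩⟩
  have hsplit : ∑ i, (a i * max (l i) 0 - b i * max (-l i) 0) = ∑ i, τ i * l i -
      ∑ i, (τ i - a i) * max (l i) 0 - ∑ i, (b i - τ i) * max (-l i) 0 := by
    rw [← sum_sub_distrib, ← sum_sub_distrib]
    refine sum_congr rfl fun i _ => ?_
    linear_combination τ i * max_zero_sub_max_neg_zero_eq_self (l i)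
  linarith
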